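/- With the order-1 OSD candidates c_i = [c_0^{(1)} + e_i, c_0^{(2)} + h_i] for 1 ≤ i ≤ K (and c_0 for i = 0, with e_0 = 0, h_0 = 0), the correlation Σ_{l=1}^N (−1)^{c_{i,l}} ỹ_l equals Σ_{l=1}^N (−1)^{c_{0,l}} ỹ_l − 2(−1)^{c_{0,i}^{(1)}} ỹ_i + Σ_{l=1}^{N−K} s_l ((−1)^{h_{i,l}} − 1), where s_l = ỹ_{K+l} (−1)^{c_{0,l}^{(2)}}. Consequently, argmax_{0 ≤ i ≤ K} Σ_l (−1)^{c_{i,l}} ỹ_l = argmax_{0 ≤ i ≤ K} { −2(−1)^{c_{0,i}^{(1)}} ỹ_i + Σ_{l=1}^{N−K} s_l (−1)^{h_{i,l}} }, with the convention ỹ_0 = 0. -/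

import Mathlib

/-!
Since `(-1)^(a + b) = (-1)^a (-1)^b`, flipping bit `i` of the information part changes only the
`i`-th term of its correlation, by `-2 (-1)^(c_{0,i}) ỹ_i`, while the parity part `c_0^(2) + h_i`
has correlation `∑_l s_l (-1)^(h_{i,l})`. So the correlation and the surrogate metric differ by
`∑_l (-1)^(c_{0,l}^(1)) ỹ_l`, a constant independent of the candidate, and have the same maximisers.
-/

open Finset

noncomputable def bpsk (b : ZMod 2) : ℝ := if b = 0 then 1 else -1

lemma bpsk_zero : bpsk 0 = 1 := if_pos rfl

lemma bpsk_one : bpsk 1 = -1 := if_neg (by decide)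

lemma bpsk_add_one (b : ZMod 2) : bpsk (b + 1) = -bpsk b := by
  rcases (by decide : ∀ x : ZMod 2, x = 0 ∨ x = 1) b with rfl | rfl <;>
    simp [bpsk, show (1 : ZMod 2) + 1 = 0 from rfl]

lemma bpsk_add (a b : ZMod 2) : bpsk (a + b) = bpsk a * bpsk b := by
  rcases (by decide : ∀ x : ZMod 2, x = 0 ∨ x = 1) b with rfl | rfl
  · rw [add_zero, bpsk_zero, mul_one]
  · rw [bpsk_add_one, bpsk_one, mul_neg_one]

section Correlation

variable {ι : Type*} [Fintype ι]

lemma sum_bpsk_add_single_mul [DecidableEq ι] (c : ι → ZMod 2) (y : ι → ℝ) (i : ι) :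
    ∑ l, bpsk ((c + Pi.single i 1 : ι → ZMod 2) l) * y l =
      ∑ l, bpsk (c l) * y l - 2 * bpsk (c i) * y i := by
  have hterm : ∀ l, bpsk ((c + Pi.single i 1 : ι → ZMod 2) l) * y l =
      bpsk (c l) * y l - (Pi.single i (2 * bpsk (c i) * y i) : ι → ℝ) l := by
    intro l
    rcases eq_or_ne l i with rfl | hl
    · rw [Pi.add_apply, Pi.single_eq_same, Pi.single_eq_same, bpsk_add_one]
      ring
    · simp [hl]
  simp only [hterm, sum_sub_distrib, sum_pi_single', mem_univ, if_true]

lemma sum_bpsk_add_mul (c h : ι → ZMod 2) (y : ι → ℝ) :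
    ∑ l, bpsk ((c + h) l) * y l = ∑ l, y l * bpsk (c l) * bpsk (h l) :=
  sum_congr rfl fun l _ => by rw [Pi.add_apply, bpsk_add]; ring

end Correlation

lemma forall_le_iff_of_eq_add_const {α β : Type*} [AddCommMonoid β] [PartialOrder β]
    [IsOrderedCancelAddMonoid β] {f g : α → β} (C : β) (hfg : ∀ a, f a = g a + C) (a₀ : α) :
    (∀ a, f a ≤ f a₀) ↔ ∀ a, g a ≤ g a₀ := by
  simp only [hfg, add_le_add_iff_right]

/-- `none` is the candidate `c_0` (with `ỹ_0 = 0`), `some i` the candidate with bit `i` flipped. -/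
theorem osd1_correlation_identity (K m : ℕ)
    (y1 : Fin K → ℝ) (y2 : Fin m → ℝ)
    (c01 : Fin K → ZMod 2) (c02 : Fin m → ZMod 2)
    (h : Fin K → Fin m → ZMod 2)
    (s : Fin m → ℝ) (hs : ∀ l, s l = y2 l * bpsk (c02 l))
    (corr : Option (Fin K) → ℝ)
    (hcorr0 : corr none =
      (∑ l, bpsk (c01 l) * y1 l) + ∑ l, bpsk (c02 l) * y2 l)
    (hcorr : ∀ i, corr (some i) =
      (∑ l, bpsk (((c01 + Pi.single i 1 : Fin K → ZMod 2)) l) * y1 l) + ∑ l, bpsk (((c02 + h i : Fin m → ZMod 2)) l) * y2 l)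
    (surr : Option (Fin K) → ℝ)
    (hsurr0 : surr none = ∑ l, s l)
    (hsurr : ∀ i, surr (some i) =
      -2 * bpsk (c01 i) * y1 i + ∑ l, s l * bpsk (h i l)) :
    (∀ i : Fin K, corr (some i) =
      corr none - 2 * bpsk (c01 i) * y1 i + ∑ l, s l * (bpsk (h i l) - 1)) ∧
    (∀ o₀ : Option (Fin K),
      (∀ o, corr o ≤ corr o₀) ↔ (∀ o, surr o ≤ surr o₀)) := by
  have hparity_corr : ∑ l, bpsk (c02 l) * y2 l = ∑ l, s l :=
    sum_congr rfl fun l _ => by rw [hs, mul_comm]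
  have hflip : ∀ i, corr (some i) =
      corr none - 2 * bpsk (c01 i) * y1 i + ∑ l, s l * (bpsk (h i l) - 1) := by
    intro i
    rw [hcorr, hcorr0, sum_bpsk_add_single_mul, sum_bpsk_add_mul, hparity_corr]
    simp only [← hs, mul_sub_one, sum_sub_distrib]
    ring
  refine ⟨hflip, forall_le_iff_of_eq_add_const (corr none - surr none) fun o => ?_⟩
  cases o with
  | none => ring
  | some i =>
    rw [hflip, hsurr, hsurr0]
    simp only [mul_sub_one, sum_sub_distrib]
    ring
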